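/- arXiv:1409.4711 — 6 statements merged into one kernel-verified Lean document; each statement's English description precedes it below -/
import Mathlib

section
/- Let p and f be positive integers with f < p. Let r be the smallest positive integer such that (p−f)·(27/2)^r > p/50, and let k be the smallest integer greater than r such that (p−f)·(27/2)^r·(1.013)^{k−r} > 71·p/72. Then there is an absolute constant C > 0, independent of p and f, such that 74^{2k+1} ≤ C·(p/(p−f))^{3.31}. -/
/-!
Minimality of `r` gives `(p - f)·(27/2)^(r-1) ≤ p/50` when `r ≥ 2`, so in all cases
`(27/2)^(r-1) ≤ p/(p - f)`. Minimality of `k` gives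
`(p - f)·(27/2)^r·1.013^(k-r-1) ≤ 71p/72 < 50·(p - f)·(27/2)^r` when `k ≥ r + 2`, so
`1.013^(k-r-1) < 50 < 1.013^310` and `k ≤ r + 310`. Hence `74^(2k+1) ≤ 74^623·(74^2)^(r-1)`,
and `74^2 ≤ (27/2)^3.31` turns `(74^2)^(r-1)` into at most `(p/(p - f))^3.31`.
-/

open Real

lemma mul_pow_sub_pred_le_of_minimal {a b t c : ℝ} {m n : ℕ} (htc : t ≤ c) (hac : a ≤ c)
    (hmn : m < n) (hmin : ∀ n', m < n' → a * b ^ (n' - m) > t → n ≤ n') :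
    a * b ^ (n - m - 1) ≤ c := by
  rcases Nat.lt_or_ge (m + 1) n with hlt | hle
  · have hpred : ¬ a * b ^ (n - 1 - m) > t := fun h =>
      (hmin (n - 1) (by omega) h).not_gt (by omega)
    rw [show n - m - 1 = n - 1 - m by omega]
    exact (not_lt.1 hpred).trans htc
  · simpa [show n - m - 1 = 0 by omega] using hac

lemma pow_le_rpow_pow_of_le_rpow {x y e : ℝ} (hx : 0 ≤ x) (hy : 0 ≤ y) (h : x ≤ y ^ e)
    (n : ℕ) : x ^ n ≤ (y ^ n) ^ e :=
  (pow_le_pow_left₀ hx h n).trans_eq (rpow_pow_comm hy e n)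

lemma fifty_lt_pow_310 : (50 : ℝ) < 1.013 ^ 310 := by
  rw [show 310 = 155 * 2 from rfl, pow_mul]
  norm_num

/-- This is where the exponent comes from: `2 log 74 / log (27/2) ≈ 3.3074 < 3.31`. -/
lemma seventyFour_sq_le_rpow : (74 : ℝ) ^ 2 ≤ (27 / 2 : ℝ) ^ (3.31 : ℝ) := by
  refine le_of_pow_le_pow_left₀ (n := 100) (by norm_num) (by positivity) ?_
  rw [← rpow_mul_natCast (by norm_num), show (3.31 : ℝ) * (100 : ℕ) = (331 : ℕ) by norm_num,
    rpow_natCast, show 331 = 165 * 2 + 1 from rfl, pow_succ (27 / 2 : ℝ), pow_mul (27 / 2 : ℝ)]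
  norm_num

/-- Arithmetic content of the degree bound for the overlay graph `G(p,f) = L(p)^{2k+1}`:
if `r` is the smallest positive integer with `(p-f)·(27/2)^r > p/50`, and `k` is the smallest
integer greater than `r` with `(p-f)·(27/2)^r·(1.013)^{k-r} > 71·p/72`, then
`74^{2k+1} ≤ C·(p/(p-f))^{3.31}` for an absolute constant `C`. -/
theorem stmt0 :
    ∃ C : ℝ, 0 < C ∧
      ∀ p f r k : ℕ, 0 < p → 0 < f → f < p →
        (0 < r ∧ ((p : ℝ) - f) * (27 / 2 : ℝ) ^ r > (p : ℝ) / 50 ∧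
          ∀ r' : ℕ, 0 < r' → ((p : ℝ) - f) * (27 / 2 : ℝ) ^ r' > (p : ℝ) / 50 → r ≤ r') →
        (r < k ∧
          ((p : ℝ) - f) * (27 / 2 : ℝ) ^ r * (1.013 : ℝ) ^ (k - r) > 71 * (p : ℝ) / 72 ∧
          ∀ k' : ℕ, r < k' →
            ((p : ℝ) - f) * (27 / 2 : ℝ) ^ r * (1.013 : ℝ) ^ (k' - r) > 71 * (p : ℝ) / 72 →
            k ≤ k') →
        (74 : ℝ) ^ (2 * k + 1) ≤ C * ((p : ℝ) / ((p : ℝ) - f)) ^ (3.31 : ℝ) := by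
  refine ⟨74 ^ 623, by positivity, ?_⟩
  rintro p f r k hp hf hfp ⟨hr, hr_gt, hr_min⟩ ⟨hrk, -, hk_min⟩
  have hp' : (0 : ℝ) < p := by exact_mod_cast hp
  have hf' : (0 : ℝ) < f := by exact_mod_cast hf
  have hpf : (0 : ℝ) < p - f := sub_pos.2 (by exact_mod_cast hfp)
  have hA : (27 / 2 : ℝ) ^ (r - 1) ≤ p / (p - f) := by
    rw [le_div_iff₀ hpf, mul_comm]
    exact mul_pow_sub_pred_le_of_minimal (m := 0) (by linarith) (by linarith) hr
      fun r' hr' h => hr_min r' hr' h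
  have hB : (1.013 : ℝ) ^ (k - r - 1) ≤ 50 := by
    have := mul_pow_sub_pred_le_of_minimal (c := 50 * ((p - f) * (27 / 2) ^ r))
      (by linarith) (by nlinarith) hrk hk_min
    nlinarith
  have hkr : k - r - 1 < 310 :=
    (pow_lt_pow_iff_right₀ (by norm_num)).1 (hB.trans_lt fifty_lt_pow_310)
  calc (74 : ℝ) ^ (2 * k + 1) ≤ 74 ^ (623 + 2 * (r - 1)) :=
        pow_le_pow_right₀ (by norm_num) (by omega)
    _ = 74 ^ 623 * (74 ^ 2) ^ (r - 1) := by rw [pow_add, pow_mul]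
    _ ≤ 74 ^ 623 * ((27 / 2) ^ (r - 1)) ^ (3.31 : ℝ) := by
      gcongr
      exact pow_le_rpow_pow_of_le_rpow (by norm_num) (by norm_num) seventyFour_sq_le_rpow _
    _ ≤ 74 ^ 623 * (p / (p - f)) ^ (3.31 : ℝ) := by gcongr
end

section
/- Under the hypotheses below, for every R ⊆ V with |R| ≥ p − f, the set P(R) = N^k(P'(N^k(R))) ∩ R satisfies P(R) ⊆ R and |P(R)| ≥ |R|/7. -/
/-- `ballSet G k S` is the set of vertices of `G` at distance at most `k` from the set `S`,
i.e. vertices reachable from some vertex of `S` by a walk of length at most `k`. -/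
def ballSet {V : Type*} (G : SimpleGraph V) (k : ℕ) (S : Set V) : Set V :=
  {v | ∃ u ∈ S, ∃ w : G.Walk u v, w.length ≤ k}

/-- Parts 1 and 2 of the subgraph property (Lemma 2 of the paper, with α = 1/7):
under the expansion hypotheses (E1), (E2) and the properties of `P'`,
for every `R ⊆ V` with `|R| ≥ p - f`, the set `P(R) = N^k(P'(N^k(R))) ∩ R`
satisfies `P(R) ⊆ R` and `|P(R)| ≥ |R|/7`. -/
theorem stmt3 {V : Type*} [Fintype V] (G : SimpleGraph V) (p f k : ℕ)
    (hp : p = Fintype.card V) (hp2 : 2 ≤ p) (hf : f < p) (hk : 0 < k)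
    (P' : Set V → Set V)
    (hE1 : ∀ S : Set V, p - f ≤ S.ncard →
      (71 / 72 : ℝ) * p < ((ballSet G k S).ncard : ℝ))
    (hE2 : ∀ S : Set V, S.Nonempty → S.ncard < p - f →
      ((S.ncard : ℝ) / ((p : ℝ) - f)) * ((71 / 72 : ℝ) * p) < ((ballSet G k S).ncard : ℝ))
    (hP'sub : ∀ L : Set V, (71 / 72 : ℝ) * p ≤ (L.ncard : ℝ) → P' L ⊆ L)
    (hP'card : ∀ L : Set V, (71 / 72 : ℝ) * p ≤ (L.ncard : ℝ) →
      (L.ncard : ℝ) / 6 ≤ ((P' L).ncard : ℝ))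
    (hP'diam : ∀ L : Set V, (71 / 72 : ℝ) * p ≤ (L.ncard : ℝ) →
      ∀ u ∈ P' L, ∀ v ∈ P' L, ∃ w : G.Walk u v,
        (w.length : ℝ) ≤ 30 * Real.logb 2 p ∧ ∀ x ∈ w.support, x ∈ P' L)
    (hP'mono : ∀ L0 L1 : Set V, L0 ⊆ L1 → (71 / 72 : ℝ) * p ≤ (L0.ncard : ℝ) →
      P' L0 ⊆ P' L1)
    (R : Set V) (hR : p - f ≤ R.ncard) :
    ballSet G k (P' (ballSet G k R)) ∩ R ⊆ R ∧
    (R.ncard : ℝ) / 7 ≤ (((ballSet G k (P' (ballSet G k R)) ∩ R).ncard : ℝ)) := by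
  classical
  set L := ballSet G k R with hLdef
  have hRL : R ⊆ L := fun v hv => ⟨v, hv, SimpleGraph.Walk.nil, by simp⟩
  have hL71 : (71/72 : ℝ) * p < L.ncard := hE1 R hR
  have hL71' : (71/72 : ℝ) * p ≤ L.ncard := le_of_lt hL71
  have hPL : (L.ncard : ℝ) / 6 ≤ ((P' L).ncard : ℝ) := hP'card L hL71'
  set A := ballSet G k (P' L) with hAdef
  set B := R \ A with hBdef
  refine ⟨Set.inter_subset_right, ?_⟩
  have hsplit : (R ∩ A).ncard + (R \ A).ncard = R.ncard :=
    Set.ncard_inter_add_ncard_diff_eq_ncard R A (Set.toFinite _)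
  have hAR : A ∩ R = R ∩ A := Set.inter_comm _ _
  rw [hAR]
  have hppos : (0:ℝ) < p := by positivity
  by_cases hBemp : B = ∅
  · have : R \ A = ∅ := hBemp
    have hRA : R ∩ A = R := by
      rw [Set.inter_eq_left]
      intro v hv
      by_contra hvA
      exact absurd (Set.mem_diff_of_mem hv hvA) (by simp [this])
    rw [hRA]
    have : (0:ℝ) ≤ (R.ncard : ℝ) := by positivity
    linarith
  · have hBne : B.Nonempty := Set.nonempty_iff_ne_empty.mpr hBemp
    -- ballSet of B avoids P' L
    have hdisj : ballSet G k B ⊆ (P' L)ᶜ := by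
      rintro v ⟨b, hb, w, hw⟩ hv
      exact hb.2 ⟨v, hv, w.reverse, by simpa using hw⟩
    have hle : (ballSet G k B).ncard ≤ ((P' L)ᶜ).ncard :=
      Set.ncard_le_ncard hdisj (Set.toFinite ((P' L)ᶜ))
    have hcompl : ((P' L)ᶜ).ncard + (P' L).ncard = p := by
      rw [hp, add_comm, ← Nat.card_eq_fintype_card]
      exact Set.ncard_add_ncard_compl (P' L) (Set.toFinite _) (Set.toFinite _)
    have hNB : ((ballSet G k B).ncard : ℝ) ≤ (p : ℝ) - (P' L).ncard := by
      have := hcompl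
      have h1 : (((P' L)ᶜ).ncard : ℝ) + ((P' L).ncard : ℝ) = p := by exact_mod_cast this
      have h2 : ((ballSet G k B).ncard : ℝ) ≤ (((P' L)ᶜ).ncard : ℝ) := by exact_mod_cast hle
      linarith
    have hNBlt : ((ballSet G k B).ncard : ℝ) < (361/432 : ℝ) * p := by
      have : (71/432 : ℝ) * p < ((P' L).ncard : ℝ) := by linarith
      linarith
    have hBlt : B.ncard < p - f := by
      by_contra h
      push_neg at h
      have := hE1 B h
      linarith
    have hE2B := hE2 B hBne hBlt
    have hpf : (0:ℝ) < (p:ℝ) - (f:ℝ) := by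
      have : (f:ℝ) < (p:ℝ) := by exact_mod_cast hf
      linarith
    have hBreal : (B.ncard : ℝ) < (361/426 : ℝ) * ((p:ℝ) - f) := by
      have h1 : ((B.ncard : ℝ) / ((p:ℝ) - f)) * ((71/72 : ℝ) * p) < (361/432 : ℝ) * p :=
        lt_trans hE2B hNBlt
      have h2 : (B.ncard : ℝ) / ((p:ℝ) - f) < (361/426 : ℝ) := by
        nlinarith
      calc (B.ncard : ℝ) = ((B.ncard : ℝ) / ((p:ℝ) - f)) * ((p:ℝ) - f) := by
            field_simp
        _ < (361/426 : ℝ) * ((p:ℝ) - f) := by nlinarith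
    have hRd : (p:ℝ) - f ≤ (R.ncard : ℝ) := by
      have : ((p - f : ℕ) : ℝ) ≤ (R.ncard : ℝ) := by exact_mod_cast hR
      rwa [Nat.cast_sub (le_of_lt hf)] at this
    have hBR : (B.ncard : ℝ) < (361/426 : ℝ) * (R.ncard : ℝ) := by nlinarith
    have hsplitR : ((R ∩ A).ncard : ℝ) + (B.ncard : ℝ) = (R.ncard : ℝ) := by
      exact_mod_cast hsplit
    linarith
end

section
/- Under the hypotheses below, for every R ⊆ V with |R| ≥ p − f, any two vertices of P(R) = N^k(P'(N^k(R))) ∩ R are joined by a path of length at most 30·log₂ p + 2 in the graph G^{2k+1} all of whose vertices belong to P(R); that is, the subgraph of G^{2k+1} induced by P(R) has diameter at most 30·log₂ p + 2. -/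
/-- The `j`-th power of a simple graph `G`: two distinct vertices are adjacent
iff they are joined in `G` by a walk of length at most `j`. -/
def graphPow {V : Type*} (G : SimpleGraph V) (j : ℕ) : SimpleGraph V where
  Adj u v := u ≠ v ∧ ∃ w : G.Walk u v, w.length ≤ j
  symm := by
    refine ⟨?_⟩
    rintro u v ⟨huv, w, hw⟩
    exact ⟨huv.symm, w.reverse, by simpa using hw⟩
  loopless := by
    refine ⟨?_⟩
    rintro v ⟨hv, -⟩
    exact hv rfl

/-!
Put `L = N^k(R)`; by (E1) `|L| > (71/72) p`, so `P'(L) ⊆ L` has diameter at most `30 log₂ p`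
through its own vertices. Every vertex of `P'(L)` lies within distance `k` of some vertex of `R`,
and that vertex belongs to `P(R)`. Replacing each vertex of a short walk inside `P'(L)` by such a
representative turns consecutive vertices into vertices at distance at most `2k + 1`, i.e. into a
walk of `G^{2k+1}` inside `P(R)`; the endpoints `u, v ∈ P(R)` cost one more step in total.
-/

section ShadowWalk

variable {V : Type*} {G : SimpleGraph V} {j k : ℕ} {T : Set V}

lemma exists_graphPow_walk_cons_of_length_le {x y z : V} (hx : x ∈ T)
    (w : G.Walk x y) (hw : w.length ≤ j)
    (W : (graphPow G j).Walk y z) (hW : ∀ v ∈ W.support, v ∈ T) :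
    ∃ W' : (graphPow G j).Walk x z, W'.length ≤ W.length + 1 ∧ ∀ v ∈ W'.support, v ∈ T := by
  by_cases hxy : x = y
  · subst hxy
    exact ⟨W, by omega, hW⟩
  · have hadj : (graphPow G j).Adj x y := ⟨hxy, w, hw⟩
    refine ⟨.cons hadj W, by simp, ?_⟩
    simp only [SimpleGraph.Walk.support_cons, List.mem_cons, forall_eq_or_imp]
    exact ⟨hx, hW⟩

lemma exists_graphPow_walk_of_walk_subset_ballSet {S : Set V} (hS : S ⊆ ballSet G k T)
    {a b : V} (w : G.Walk a b) (hwS : ∀ x ∈ w.support, x ∈ S)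
    {a' b' : V} (ha' : a' ∈ T) (wa : G.Walk a a') (hwa : wa.length ≤ k)
    (hb' : b' ∈ T) (wb : G.Walk b b') (hwb : wb.length ≤ k) :
    ∃ W : (graphPow G (2 * k + 1)).Walk a' b',
      W.length ≤ w.length + 1 ∧ ∀ x ∈ W.support, x ∈ T := by
  induction w generalizing a' with
  | nil =>
    refine exists_graphPow_walk_cons_of_length_le ha' (wa.reverse.append wb) ?_ .nil
      (by simpa using hb')
    simp only [SimpleGraph.Walk.length_append, SimpleGraph.Walk.length_reverse]
    omega
  | @cons a c b hac q ih =>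
    obtain ⟨c', hc', wc, hwc⟩ := hS (hwS c (by simp))
    obtain ⟨W, hWlen, hWT⟩ := ih (fun x hx => hwS x (by simp [hx])) hc' wc.reverse
      (by simpa using hwc) wb hwb
    obtain ⟨W', hW'len, hW'T⟩ := exists_graphPow_walk_cons_of_length_le ha'
      ((wa.reverse.append hac.toWalk).append wc.reverse) (by
        simp only [SimpleGraph.Walk.length_append, SimpleGraph.Walk.length_reverse,
          SimpleGraph.Adj.length_toWalk]
        omega) W hWT
    exact ⟨W', by simp only [SimpleGraph.Walk.length_cons]; omega, hW'T⟩

end ShadowWalk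

theorem stmt4_general {V : Type*} (G : SimpleGraph V) (p f k : ℕ)
    (P' : Set V → Set V)
    (hE1 : ∀ S : Set V, p - f ≤ S.ncard →
      (71 / 72 : ℝ) * p < ((ballSet G k S).ncard : ℝ))
    (hP'sub : ∀ L : Set V, (71 / 72 : ℝ) * p ≤ (L.ncard : ℝ) → P' L ⊆ L)
    (hP'diam : ∀ L : Set V, (71 / 72 : ℝ) * p ≤ (L.ncard : ℝ) →
      ∀ u ∈ P' L, ∀ v ∈ P' L, ∃ w : G.Walk u v,
        (w.length : ℝ) ≤ 30 * Real.logb 2 p ∧ ∀ x ∈ w.support, x ∈ P' L)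
    (R : Set V) (hR : p - f ≤ R.ncard) :
    ∀ u ∈ ballSet G k (P' (ballSet G k R)) ∩ R,
      ∀ v ∈ ballSet G k (P' (ballSet G k R)) ∩ R,
        ∃ w : (graphPow G (2 * k + 1)).Walk u v,
          (w.length : ℝ) ≤ 30 * Real.logb 2 p + 2 ∧
          ∀ x ∈ w.support, x ∈ ballSet G k (P' (ballSet G k R)) ∩ R := by
  set L := ballSet G k R
  have hL : (71 / 72 : ℝ) * p ≤ L.ncard := (hE1 R hR).le
  have hcover : P' L ⊆ ballSet G k (ballSet G k (P' L) ∩ R) := by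
    intro x hx
    obtain ⟨y, hyR, wy, hwy⟩ := hP'sub L hL hx
    exact ⟨y, ⟨⟨x, hx, wy.reverse, by simpa using hwy⟩, hyR⟩, wy, hwy⟩
  rintro u ⟨⟨u', hu', wu, hwu⟩, huR⟩ v ⟨⟨v', hv', wv, hwv⟩, hvR⟩
  obtain ⟨w, hwlen, hwP⟩ := hP'diam L hL u' hu' v' hv'
  obtain ⟨W, hWlen, hWT⟩ := exists_graphPow_walk_of_walk_subset_ballSet hcover w hwP
    ⟨⟨u', hu', wu, hwu⟩, huR⟩ wu hwu ⟨⟨v', hv', wv, hwv⟩, hvR⟩ wv hwv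
  refine ⟨W, ?_, hWT⟩
  have : (W.length : ℝ) ≤ w.length + 1 := by exact_mod_cast hWlen
  linarith

/-- Part 3 of the subgraph property (Lemma 2 of the paper, β = 30, γ = 2):
under the expansion hypotheses (E1), (E2) and the properties of `P'`,
for every `R ⊆ V` with `|R| ≥ p - f`, any two vertices of
`P(R) = N^k(P'(N^k(R))) ∩ R` are joined by a path of length at most `30·log₂ p + 2`
in the graph `G^{2k+1}` all of whose vertices belong to `P(R)`. -/
theorem stmt4 {V : Type*} [Fintype V] (G : SimpleGraph V) (p f k : ℕ)
    (hp : p = Fintype.card V) (hp2 : 2 ≤ p) (hf : f < p) (hk : 0 < k)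
    (P' : Set V → Set V)
    (hE1 : ∀ S : Set V, p - f ≤ S.ncard →
      (71 / 72 : ℝ) * p < ((ballSet G k S).ncard : ℝ))
    (hE2 : ∀ S : Set V, S.Nonempty → S.ncard < p - f →
      ((S.ncard : ℝ) / ((p : ℝ) - f)) * ((71 / 72 : ℝ) * p) < ((ballSet G k S).ncard : ℝ))
    (hP'sub : ∀ L : Set V, (71 / 72 : ℝ) * p ≤ (L.ncard : ℝ) → P' L ⊆ L)
    (hP'card : ∀ L : Set V, (71 / 72 : ℝ) * p ≤ (L.ncard : ℝ) →
      (L.ncard : ℝ) / 6 ≤ ((P' L).ncard : ℝ))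
    (hP'diam : ∀ L : Set V, (71 / 72 : ℝ) * p ≤ (L.ncard : ℝ) →
      ∀ u ∈ P' L, ∀ v ∈ P' L, ∃ w : G.Walk u v,
        (w.length : ℝ) ≤ 30 * Real.logb 2 p ∧ ∀ x ∈ w.support, x ∈ P' L)
    (hP'mono : ∀ L0 L1 : Set V, L0 ⊆ L1 → (71 / 72 : ℝ) * p ≤ (L0.ncard : ℝ) →
      P' L0 ⊆ P' L1)
    (R : Set V) (hR : p - f ≤ R.ncard) :
    ∀ u ∈ ballSet G k (P' (ballSet G k R)) ∩ R,
      ∀ v ∈ ballSet G k (P' (ballSet G k R)) ∩ R,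
        ∃ w : (graphPow G (2 * k + 1)).Walk u v,
          (w.length : ℝ) ≤ 30 * Real.logb 2 p + 2 ∧
          ∀ x ∈ w.support, x ∈ ballSet G k (P' (ballSet G k R)) ∩ R :=
  stmt4_general G p f k P' hE1 hP'sub hP'diam R hR
end

section
/- Let p, g, u be real numbers with p ≥ 1, g ≥ 1, p·g > 2, and u ≥ 11·p²·g. Let v1 and v2 be integers with 1 ≤ v2 < v1 ≤ p. Let T1 and T2 be real numbers with u − p·g ≤ T1 ≤ u and u − p·g ≤ T2 ≤ u, and let w1 and w2 be real numbers with w1 > T1·v1/p − 1 and w2 < T2·v2/p + p·g + 1. Then w1 − w2 > 7·p·g. -/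
/-- Separation inequality for the load-balancing algorithm Balance-Load: with at least
`11·p²·g` outstanding tasks, the global ranks of tasks selected by two distinct processors
`v1 > v2` are more than `7·p·g` apart. -/
theorem stmt8 (p g u : ℝ) (v1 v2 : ℤ) (T1 T2 w1 w2 : ℝ)
    (hp : 1 ≤ p) (hg : 1 ≤ g) (hpg : 2 < p * g) (hu : 11 * p ^ 2 * g ≤ u)
    (hv2 : 1 ≤ v2) (hv : v2 < v1) (hv1 : (v1 : ℝ) ≤ p)
    (hT1l : u - p * g ≤ T1) (hT1u : T1 ≤ u)
    (hT2l : u - p * g ≤ T2) (hT2u : T2 ≤ u)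
    (hw1 : T1 * (v1 : ℝ) / p - 1 < w1)
    (hw2 : w2 < T2 * (v2 : ℝ) / p + p * g + 1) :
    7 * p * g < w1 - w2 := by
  have hp0 : (0:ℝ) < p := lt_of_lt_of_le one_pos hp
  have hg0 : (0:ℝ) < g := lt_of_lt_of_le one_pos hg
  have hv12 : (v2:ℝ) + 1 ≤ (v1:ℝ) := by exact_mod_cast hv
  have hv2' : (1:ℝ) ≤ (v2:ℝ) := by exact_mod_cast hv2
  have hv2p : (v2:ℝ) ≤ p - 1 := by linarith
  have hupg : 0 ≤ u - p * g := by nlinarith [mul_pos (mul_pos hp0 hp0) hg0]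
  have key : 10 * p ^ 2 * g ≤ T1 * (v1:ℝ) - T2 * (v2:ℝ) := by
    nlinarith [mul_nonneg (mul_pos hp0 hg0).le (sub_nonneg.2 hv2'),
      mul_le_mul_of_nonneg_right hT1l (by linarith : (0:ℝ) ≤ (v1:ℝ)),
      mul_le_mul_of_nonneg_right hT2u (by linarith : (0:ℝ) ≤ (v2:ℝ)),
      mul_le_mul_of_nonneg_left hv12 (by linarith : (0:ℝ) ≤ u - p*g),
      mul_pos (mul_pos hp0 hp0) hg0]
  have key2 : 10 * p * g ≤ (T1 * (v1:ℝ) - T2 * (v2:ℝ)) / p := by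
    rw [le_div_iff₀ hp0]; nlinarith [key]
  have : T1 * (v1:ℝ) / p - T2 * (v2:ℝ) / p = (T1 * (v1:ℝ) - T2 * (v2:ℝ)) / p := by ring
  nlinarith [key2]
end

section
/- Let p, u, x be real numbers with p > 0 and 7 ≤ x ≤ u. Let T1 and T2 be real numbers with u·(1 − 1/x) ≤ T1 ≤ u and u·(1 − 1/x) ≤ T2 ≤ u and T1 ≥ 1. Let r1 and r2 be real numbers with 1 ≤ r2 ≤ u and r1 ≤ r2 + u/x. If v1 and v2 are real numbers with v1 < p·(r1 + 1)/T1 and v2 > p·(r2 − 1)/T2, then v1 − v2 < 7·p/x. -/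
/-- Algebraic core of the "x as parameter" lemma for algorithm Balance-Load: the identifiers
of two processors duplicating a task differ by less than `7·p/x`. -/
theorem stmt9 (p u x T1 T2 r1 r2 v1 v2 : ℝ)
    (hp : 0 < p) (hx : 7 ≤ x) (hxu : x ≤ u)
    (hT1l : u * (1 - 1 / x) ≤ T1) (hT1u : T1 ≤ u)
    (hT2l : u * (1 - 1 / x) ≤ T2) (hT2u : T2 ≤ u)
    (hT1 : 1 ≤ T1)
    (hr2l : 1 ≤ r2) (hr2u : r2 ≤ u)
    (hr : r1 ≤ r2 + u / x)
    (hv1 : v1 < p * (r1 + 1) / T1)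
    (hv2 : v2 > p * (r2 - 1) / T2) :
    v1 - v2 < 7 * p / x := by
  have hx0 : (0:ℝ) < x := by linarith
  have hu0 : (0:ℝ) < u := by linarith
  have hT1p : (0:ℝ) < T1 := by linarith
  have h1x : (1:ℝ)/x ≤ 1/7 := by
    apply one_div_le_one_div_of_le <;> linarith
  have hT2p : (0:ℝ) < T2 := by nlinarith
  have hux : u / x * x = u := div_mul_cancel₀ u (ne_of_gt hx0)
  have key : p * (r1 + 1) / T1 - p * (r2 - 1) / T2 ≤ 7 * p / x := by
    rw [div_sub_div _ _ (ne_of_gt hT1p) (ne_of_gt hT2p),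
      div_le_div_iff₀ (by positivity) hx0]
    have hr' : r1 * x ≤ r2 * x + u := by
      have := mul_le_mul_of_nonneg_right hr (le_of_lt hx0)
      nlinarith
    have hT1l' : u * x - u ≤ T1 * x := by
      have := mul_le_mul_of_nonneg_right hT1l (le_of_lt hx0)
      have hx1 : (1 - 1/x) * x = x - 1 := by field_simp
      nlinarith
    have hT2l' : u * x - u ≤ T2 * x := by
      have := mul_le_mul_of_nonneg_right hT2l (le_of_lt hx0)
      have hx1 : (1 - 1/x) * x = x - 1 := by field_simp
      nlinarith
    have h6 : 6 * u / 7 ≤ u * (1 - 1 / x) := by nlinarith [mul_le_mul_of_nonneg_left h1x hu0.le]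
    have hT16 : 6 * u / 7 ≤ T1 := by linarith
    have hT26 : 6 * u / 7 ≤ T2 := by linarith
    have Q : (r1 + 1) * T2 * x - (r2 - 1) * T1 * x ≤ 7 * (T1 * T2) := by
      nlinarith [mul_le_mul_of_nonneg_right hr' hT2p.le,
        mul_le_mul_of_nonneg_left hT2u (mul_nonneg (by linarith : (0:ℝ) ≤ r2) hx0.le),
        mul_le_mul_of_nonneg_left hT2u hx0.le,
        mul_le_mul_of_nonneg_left hT2u hu0.le,
        mul_le_mul_of_nonneg_left hT1l' (sub_nonneg.mpr hr2l),
        mul_le_mul_of_nonneg_left hxu hu0.le,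
        mul_le_mul_of_nonneg_left hr2u hu0.le,
        mul_le_mul hT16 hT26 (by linarith : (0:ℝ) ≤ 6 * u / 7) hT1p.le,
        sq_nonneg u]
    calc (p * (r1 + 1) * T2 - T1 * (p * (r2 - 1))) * x
        = p * ((r1 + 1) * T2 * x - (r2 - 1) * T1 * x) := by ring
      _ ≤ p * (7 * (T1 * T2)) := mul_le_mul_of_nonneg_left Q hp.le
      _ = 7 * p * (T1 * T2) := by ring
  linarith
end

section
/- Let n be a positive integer and let X_1, …, X_n be random variables on a probability space, each taking values in {0,1}, such that for every k in {1,…,n} and every event A in the σ-algebra generated by X_1, …, X_{k−1} with positive probability, P({X_k = 1} ∩ A) ≥ (1/2)·P(A). Then for every real number d, P(X_1 + ⋯ + X_n ≤ d) ≤ 2^{−n} · Σ_{j=0}^{⌊d⌋} (n choose j), where the sum is empty when d < 0. -/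
/-!
Write `S m = X 0 + ⋯ + X (m - 1)`. The event `{S (m + 1) ≤ c}` is covered by `{S m ≤ c - 1}`
together with `{c - 1 < S m ≤ c} ∩ {X m = 0}`; the latter event has at most half the probability
of `{c - 1 < S m ≤ c}`, an event of `σ(X 0, …, X (m - 1))`. Hence
`P(S (m + 1) ≤ c) ≤ (P(S m ≤ c) + P(S m ≤ c - 1)) / 2`, which by Pascal's rule is the
recursion that the distribution function of `Binomial(m, 1/2)` satisfies with equality;
induct on `m`.
-/

open MeasureTheory Finset

/-- `P(Y ≤ d)` for `Y ~ Binomial(m, 1/2)`. -/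
noncomputable def binomialCDF (m : ℕ) (d : ℝ) : ℝ :=
  (2 : ℝ)⁻¹ ^ m * ∑ j ∈ range ((⌊d⌋ + 1).toNat), (m.choose j : ℝ)

lemma binomialCDF_nonneg (m : ℕ) (d : ℝ) : 0 ≤ binomialCDF m d := by
  unfold binomialCDF
  positivity

lemma binomialCDF_zero_of_nonneg {d : ℝ} (hd : 0 ≤ d) : binomialCDF 0 d = 1 := by
  have hK : (⌊d⌋ + 1).toNat = ⌊d⌋.toNat + 1 := by
    have := Int.floor_nonneg.mpr hd
    omega
  simp [binomialCDF, hK, sum_range_succ', Nat.choose_eq_zero_of_lt]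

lemma sum_range_succ_choose_succ (m K : ℕ) :
    ∑ j ∈ range (K + 1), ((m + 1).choose j : ℝ)
      = ∑ j ∈ range (K + 1), (m.choose j : ℝ) + ∑ j ∈ range K, (m.choose j : ℝ) := by
  simp only [sum_range_succ' _ K, Nat.choose_succ_succ', Nat.cast_add, sum_add_distrib,
    Nat.choose_zero_right]
  ring

lemma binomialCDF_succ (m : ℕ) (d : ℝ) :
    binomialCDF (m + 1) d = 2⁻¹ * (binomialCDF m d + binomialCDF m (d - 1)) := by
  unfold binomialCDF
  rw [Int.floor_sub_one, sub_add_cancel]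
  rcases lt_or_ge ⌊d⌋ 0 with hd | hd
  · simp [Int.toNat_eq_zero.mpr hd.le, Int.toNat_eq_zero.mpr (by omega : ⌊d⌋ + 1 ≤ 0)]
  · rw [show (⌊d⌋ + 1).toNat = ⌊d⌋.toNat + 1 by omega, sum_range_succ_choose_succ]
    ring

lemma Function.extend_apply_of_forall {α β γ : Type*} {f : α → β} {g : α → γ}
    {e' : β → γ} {P : β → γ → Prop} (hg : ∀ a, P (f a) (g a)) (he : ∀ b, P b (e' b))
    (b : β) :
    P b (Function.extend f g e' b) := by
  classical
  rw [Function.extend_def]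
  split_ifs with h
  · simpa [Classical.choose_spec h] using hg (Classical.choose h)
  · exact he b

section

variable {Ω : Type*} [MeasurableSpace Ω] {μ : Measure Ω}

lemma measureReal_add_le_half_add [IsFiniteMeasure μ] {S Z : Ω → ℝ} (hS : Measurable S)
    (hZ : MeasurableSet {ω | Z ω = 1}) (hval : ∀ ω, Z ω = 0 ∨ Z ω = 1) (c : ℝ)
    (hcond : 0 < μ (S ⁻¹' Set.Ioc (c - 1) c) → 1 / 2 * μ (S ⁻¹' Set.Ioc (c - 1) c) ≤
      μ ({ω | Z ω = 1} ∩ S ⁻¹' Set.Ioc (c - 1) c)) :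
    μ.real {ω | S ω + Z ω ≤ c}
      ≤ 2⁻¹ * (μ.real {ω | S ω ≤ c} + μ.real {ω | S ω ≤ c - 1}) := by
  set B := S ⁻¹' Set.Ioc (c - 1) c
  set E := {ω | Z ω = 1}
  have hB : MeasurableSet B := hS measurableSet_Ioc
  have hhalf : 2⁻¹ * μ.real B ≤ μ.real (B ∩ E) := by
    rcases eq_zero_or_pos (μ B) with h0 | hpos
    · simp [measureReal_def, h0]
    · simpa [measureReal_def, ENNReal.toReal_mul, Set.inter_comm E] using
        ENNReal.toReal_mono (measure_ne_top μ _) (hcond hpos)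
  have hsplit : μ.real (B ∩ E) + μ.real (B \ E) = μ.real B := measureReal_inter_add_sdiff hZ
  have hlevel : μ.real {ω | S ω ≤ c} = μ.real {ω | S ω ≤ c - 1} + μ.real B := by
    change μ.real (S ⁻¹' Set.Iic c) = μ.real (S ⁻¹' Set.Iic (c - 1)) + μ.real B
    rw [← Set.Iic_union_Ioc_eq_Iic (sub_le_self c zero_le_one), Set.preimage_union]
    exact measureReal_union ((Set.Iic_disjoint_Ioc le_rfl).preimage S) hB
  have hcover : {ω | S ω + Z ω ≤ c} ⊆ {ω | S ω ≤ c - 1} ∪ B \ E := by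
    intro ω (h : S ω + Z ω ≤ c)
    rcases hval ω with h0 | h1
    · rcases le_or_gt (S ω) (c - 1) with h' | h'
      · exact Or.inl h'
      · exact Or.inr ⟨⟨h', by simpa [h0] using h⟩, by simp [E, h0]⟩
    · exact Or.inl (show S ω ≤ c - 1 by linarith)
  have hsub := (measureReal_mono (μ := μ) hcover).trans (measureReal_union_le _ _)
  linarith

lemma measureReal_sum_le_binomialCDF [IsProbabilityMeasure μ] {Z : ℕ → Ω → ℝ} {F : ℕ → MeasurableSpace Ω}
    (hZ : ∀ i, Measurable (Z i)) (hval : ∀ i ω, Z i ω = 0 ∨ Z i ω = 1)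
    (hF : ∀ m, ∀ i < m, Measurable[F m] (Z i)) (N : ℕ)
    (hcond : ∀ m < N, ∀ A, MeasurableSet[F m] A →
      0 < μ A → 1 / 2 * μ A ≤ μ ({ω | Z m ω = 1} ∩ A)) (d : ℝ) :
    μ.real {ω | ∑ i ∈ range N, Z i ω ≤ d} ≤ binomialCDF N d := by
  induction N generalizing d with
  | zero =>
    rcases le_or_gt 0 d with hd | hd
    · simp [hd, binomialCDF_zero_of_nonneg]
    · simp [not_le.mpr hd, binomialCDF_nonneg]
  | succ N ih =>
    have ih' := fun d => ih (fun m hm => hcond m (Nat.lt_succ_of_lt hm)) d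
    have hSF : Measurable[F N] fun ω => ∑ i ∈ range N, Z i ω :=
      Finset.measurable_sum _ fun i hi => hF N i (mem_range.mp hi)
    have hstep := measureReal_add_le_half_add (Finset.measurable_sum _ fun i _ => hZ i)
      (hZ N (measurableSet_singleton 1)) (hval N) d
      (hcond N N.lt_succ_self _ (hSF measurableSet_Ioc))
    simp only [sum_range_succ, binomialCDF_succ]
    linarith [ih' d, ih' (d - 1)]

end

theorem stmt14_general {Ω : Type*} [MeasurableSpace Ω] (μ : Measure Ω) [IsProbabilityMeasure μ]
    (n : ℕ) (X : Fin n → Ω → ℝ)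
    (hmeas : ∀ k, Measurable (X k))
    (hval : ∀ k ω, X k ω = 0 ∨ X k ω = 1)
    (hcond : ∀ k : Fin n, ∀ A : Set Ω,
      MeasurableSet[⨆ i : Fin n, ⨆ _ : (i : ℕ) < (k : ℕ),
        MeasurableSpace.comap (X i) inferInstance] A →
      0 < μ A → (1 / 2) * μ A ≤ μ ({ω | X k ω = 1} ∩ A)) :
    ∀ d : ℝ,
      μ {ω | ∑ k, X k ω ≤ d} ≤
        ENNReal.ofReal ((2 : ℝ)⁻¹ ^ n *
          ∑ j ∈ Finset.range ((⌊d⌋ + 1).toNat), (n.choose j : ℝ)) := by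
  intro d
  set Y : ℕ → Ω → ℝ := Function.extend Fin.val X 0
  have hYX (k : Fin n) : Y k = X k := Fin.val_injective.extend_apply X 0 k
  have hsum : {ω | ∑ k, X k ω ≤ d} = {ω | ∑ i ∈ range n, Y i ω ≤ d} := by
    simp only [← Fin.sum_univ_eq_sum_range (fun i => Y i _), hYX]
  have hY : ∀ i, Measurable (Y i) :=
    Function.extend_apply_of_forall (P := fun _ f => Measurable f) hmeas
      fun _ => measurable_const
  have hYval : ∀ i ω, Y i ω = 0 ∨ Y i ω = 1 :=
    Function.extend_apply_of_forall (P := fun _ (f : Ω → ℝ) => ∀ ω, f ω = 0 ∨ f ω = 1)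
      hval fun _ _ => Or.inl rfl
  let F : ℕ → MeasurableSpace Ω := fun m =>
    ⨆ k : Fin n, ⨆ _ : (k : ℕ) < m, MeasurableSpace.comap (X k) inferInstance
  have hYF : ∀ m, ∀ i < m, Measurable[F m] (Y i) := fun m =>
    Function.extend_apply_of_forall (P := fun i f => i < m → Measurable[F m] f)
      (fun k hk => Measurable.of_comap_le (le_iSup₂_of_le k hk le_rfl))
      fun _ _ => measurable_const
  have hYcond : ∀ m < n, ∀ A, MeasurableSet[F m] A →
      0 < μ A → 1 / 2 * μ A ≤ μ ({ω | Y m ω = 1} ∩ A) :=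
    fun m hm => hYX ⟨m, hm⟩ ▸ hcond ⟨m, hm⟩
  change _ ≤ ENNReal.ofReal (binomialCDF n d)
  rw [hsum, ENNReal.le_ofReal_iff_toReal_le (measure_ne_top _ _) (binomialCDF_nonneg n d)]
  exact measureReal_sum_le_binomialCDF hY hYval hYF n hYcond d

/-- Stochastic-domination claim (inequality (20)) of the "bar on crashes" lemma:
if each `{0,1}`-valued random variable `X_k` equals `1` with conditional probability at least
`1/2` given any positive-probability event in the σ-algebra generated by `X_1, …, X_{k−1}`,
then `P(X_1 + ⋯ + X_n ≤ d) ≤ 2^{−n}·Σ_{j=0}^{⌊d⌋} (n choose j)` for every real `d`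
(the sum being empty when `d < 0`). -/
theorem stmt14 {Ω : Type*} [MeasurableSpace Ω] (μ : Measure Ω) [IsProbabilityMeasure μ]
    (n : ℕ) (hn : 0 < n) (X : Fin n → Ω → ℝ)
    (hmeas : ∀ k, Measurable (X k))
    (hval : ∀ k ω, X k ω = 0 ∨ X k ω = 1)
    (hcond : ∀ k : Fin n, ∀ A : Set Ω,
      MeasurableSet[⨆ i : Fin n, ⨆ _ : (i : ℕ) < (k : ℕ),
        MeasurableSpace.comap (X i) inferInstance] A →
      0 < μ A → (1 / 2) * μ A ≤ μ ({ω | X k ω = 1} ∩ A)) :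
    ∀ d : ℝ,
      μ {ω | ∑ k, X k ω ≤ d} ≤
        ENNReal.ofReal ((2 : ℝ)⁻¹ ^ n *
          ∑ j ∈ Finset.range ((⌊d⌋ + 1).toNat), (n.choose j : ℝ)) :=
  stmt14_general μ n X hmeas hval hcond
end
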